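/- For each i ∈ {0, 1, ..., r} with f'_i ≠ 0, define Φ_i(z) = (1/A)·( f(z)²/f'_i − 2·A·z − Σ_{j=1}^r a_j·(z − z_j)·|z − z_j| ). Fix i ∈ {1, ..., r} with f'_{i−1} ≠ 0 and f'_i ≠ 0. Then for every z ∈ (z_{i−1}, z_i) and every w ∈ (z_i, z_{i+1}), one has Φ_i(w) − Φ_{i−1}(z) = (f(z_i)²/A)·( 1/f'_i − 1/f'_{i−1} ) (with the conventions z_0 = −∞, z_{r+1} = +∞). -/
import Mathlib


open Finset

/-- The piecewise affine function `f(z) = A + ∑ a_i |z − z_i|`. -/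
noncomputable def fpa {r : ℕ} (A : ℝ) (a zs : Fin r → ℝ) (x : ℝ) : ℝ :=
  A + ∑ i, a i * |x - zs i|

/-- The fSlope `f'_i = −1 + 2 ∑_{j ≤ i} a_j` of `f` on the interval `(z_i, z_{i+1})`
(1-indexed turning points, so the sum is over the first `i` coefficients). -/
def fSlope {r : ℕ} (a : Fin r → ℝ) (i : ℕ) : ℝ :=
  -1 + 2 * ∑ j ∈ Finset.univ.filter (fun j : Fin r => (j : ℕ) < i), a j

/-- `x` belongs to the open interval `(z_i, z_{i+1})`, with the conventions
`z_0 = −∞`, `z_{r+1} = +∞` (intervals indexed by `i = 0, …, r`). -/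
def inInterval {r : ℕ} (zs : Fin r → ℝ) (i : ℕ) (x : ℝ) : Prop :=
  (∀ j : Fin r, (j : ℕ) < i → zs j < x) ∧ (∀ j : Fin r, i ≤ (j : ℕ) → x < zs j)

/-- The function `Φ_i(x) = (1/A)(f(x)²/f'_i − 2Ax − ∑ a_j (x − z_j)|x − z_j|)`, whose
constant value on the interval `(z_i, z_{i+1})` is the boundary value `F_i`. -/
noncomputable def Phi {r : ℕ} (A : ℝ) (a zs : Fin r → ℝ) (i : ℕ) (x : ℝ) : ℝ :=
  (1 / A) * (fpa A a zs x ^ 2 / fSlope a i - 2 * A * x -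
    ∑ j, a j * (x - zs j) * |x - zs j|)


lemma sgn_sum {r : ℕ} (a : Fin r → ℝ) (hsum : ∑ i, a i = 1) (i : ℕ) :
    ∑ j : Fin r, (if (j : ℕ) < i then (1:ℝ) else -1) * a j = fSlope a i := by
  have h := Finset.sum_filter_add_sum_filter_not Finset.univ (fun j : Fin r => (j:ℕ) < i) a
  have e : ∀ j : Fin r, (if (j:ℕ) < i then (1:ℝ) else -1) * a j
      = (if (j:ℕ) < i then a j else - a j) := fun j => by split <;> ring
  simp_rw [e]
  rw [Finset.sum_ite, Finset.sum_neg_distrib]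
  unfold fSlope
  rw [hsum] at h
  linarith [h]

lemma phi_eval {r : ℕ} (A : ℝ) (hA : A ≠ 0) (a zs : Fin r → ℝ) (hsum : ∑ i, a i = 1)
    (i : ℕ) (hm : fSlope a i ≠ 0) (x : ℝ)
    (hx1 : ∀ j : Fin r, (j : ℕ) < i → zs j ≤ x)
    (hx2 : ∀ j : Fin r, i ≤ (j : ℕ) → x ≤ zs j) :
    Phi A a zs i x = (1 / A) *
      ((A - ∑ j : Fin r, (if (j : ℕ) < i then (1:ℝ) else -1) * a j * zs j) ^ 2 / fSlope a i
        - ∑ j : Fin r, (if (j : ℕ) < i then (1:ℝ) else -1) * a j * zs j ^ 2) := by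
  have habs : ∀ j : Fin r, |x - zs j| = (if (j : ℕ) < i then (1:ℝ) else -1) * (x - zs j) := by
    intro j
    by_cases h : (j:ℕ) < i
    · rw [if_pos h, abs_of_nonneg (sub_nonneg.2 (hx1 j h))]; ring
    · rw [if_neg h, abs_of_nonpos (sub_nonpos.2 (hx2 j (le_of_not_gt h)))]; ring
  have h1 : ∑ j, a j * |x - zs j|
      = fSlope a i * x - ∑ j : Fin r, (if (j : ℕ) < i then (1:ℝ) else -1) * a j * zs j := by
    rw [← sgn_sum a hsum i, Finset.sum_mul, ← Finset.sum_sub_distrib]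
    refine Finset.sum_congr rfl fun j _ => ?_
    rw [habs j]; ring
  have h2 : ∑ j, a j * (x - zs j) * |x - zs j|
      = fSlope a i * x ^ 2
        - 2 * x * (∑ j : Fin r, (if (j : ℕ) < i then (1:ℝ) else -1) * a j * zs j)
        + ∑ j : Fin r, (if (j : ℕ) < i then (1:ℝ) else -1) * a j * zs j ^ 2 := by
    rw [← sgn_sum a hsum i, Finset.sum_mul, Finset.mul_sum, ← Finset.sum_sub_distrib,
      ← Finset.sum_add_distrib]
    refine Finset.sum_congr rfl fun j _ => ?_
    rw [habs j]
    by_cases h : (j:ℕ) < i <;> simp only [if_pos, if_neg, h, if_true, if_false] <;> ring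
  unfold Phi fpa
  rw [h1, h2]
  set M := fSlope a i
  set S := ∑ j : Fin r, (if (j : ℕ) < i then (1:ℝ) else -1) * a j * zs j
  set T := ∑ j : Fin r, (if (j : ℕ) < i then (1:ℝ) else -1) * a j * zs j ^ 2
  field_simp
  ring

/-- For the turning point `z_i` (1-indexed, represented by `k : Fin r` with `k = i − 1`
0-indexed), if the slopes `f'_{i−1}` and `f'_i` are nonzero, then
`F_i − F_{i−1} = (f(z_i)²/A)(1/f'_i − 1/f'_{i−1})`. -/
theorem statement10 {r : ℕ} (hr : 1 ≤ r) (A : ℝ) (hA : 0 < A)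
    (zs a : Fin r → ℝ)
    (hz : ∀ i j : Fin r, i < j → zs i < zs j)
    (ha : ∀ i, 0 < a i) (hsum : ∑ i, a i = 1)
    (k : Fin r)
    (hs1 : fSlope a (k : ℕ) ≠ 0) (hs2 : fSlope a ((k : ℕ) + 1) ≠ 0)
    (x y : ℝ) (hx : inInterval zs (k : ℕ) x) (hy : inInterval zs ((k : ℕ) + 1) y) :
    Phi A a zs ((k : ℕ) + 1) y - Phi A a zs (k : ℕ) x =
      (fpa A a zs (zs k) ^ 2 / A) *
        (1 / fSlope a ((k : ℕ) + 1) - 1 / fSlope a (k : ℕ)) := by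
  have hA' : A ≠ 0 := ne_of_gt hA
  have hk1 : ∀ j : Fin r, (j : ℕ) < (k : ℕ) → zs j ≤ zs k :=
    fun j hj => le_of_lt (hz j k hj)
  have hk2 : ∀ j : Fin r, (k : ℕ) ≤ (j : ℕ) → zs k ≤ zs j := by
    intro j hj
    rcases eq_or_lt_of_le hj with h | h
    · have : j = k := Fin.ext h.symm
      rw [this]
    · exact le_of_lt (hz k j h)
  have hk1' : ∀ j : Fin r, (j : ℕ) < (k : ℕ) + 1 → zs j ≤ zs k := by
    intro j hj
    rcases Nat.lt_succ_iff_lt_or_eq.mp hj with h | h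
    · exact hk1 j h
    · exact le_of_eq (congrArg zs (Fin.ext h))
  have hk2' : ∀ j : Fin r, (k : ℕ) + 1 ≤ (j : ℕ) → zs k ≤ zs j :=
    fun j hj => hk2 j (Nat.le_of_succ_le hj)
  have ex : Phi A a zs (k : ℕ) x = Phi A a zs (k : ℕ) (zs k) := by
    rw [phi_eval A hA' a zs hsum _ hs1 x (fun j hj => le_of_lt (hx.1 j hj))
        (fun j hj => le_of_lt (hx.2 j hj)),
      phi_eval A hA' a zs hsum _ hs1 (zs k) hk1 hk2]
  have ey : Phi A a zs ((k : ℕ) + 1) y = Phi A a zs ((k : ℕ) + 1) (zs k) := by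
    rw [phi_eval A hA' a zs hsum _ hs2 y (fun j hj => le_of_lt (hy.1 j hj))
        (fun j hj => le_of_lt (hy.2 j hj)),
      phi_eval A hA' a zs hsum _ hs2 (zs k) hk1' hk2']
  rw [ex, ey]
  unfold Phi
  set F := fpa A a zs (zs k)
  set M1 := fSlope a (k : ℕ)
  set M2 := fSlope a ((k : ℕ) + 1)
  set C := ∑ j, a j * (zs k - zs j) * |zs k - zs j|
  field_simp
  ring
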